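/- Let k be a field, B = k[X,Y], I = (X², Y−1) ⊂ B, A = k + I, and F = X²T² − Y ∈ A[T]. Then F + 1 ∈ I·A[T], A[T] + F·B[T] = B[T], and F·A[T] = F·B[T] ∩ A[T]. -/

import Mathlib

set_option maxHeartbeats 1000000
set_option synthInstance.maxHeartbeats 1000000

open MvPolynomial

noncomputable section StmtThirteen

variable (k : Type*) [Field k]

/-- The ideal `I = (X², Y-1)` of `B = k[X,Y]`. -/
def Istmt13 : Ideal (MvPolynomial (Fin 2) k) := Ideal.span {X 0 ^ 2, X 1 - 1}

/-- The subring `A = k + I` of `B = k[X,Y]`, realized as the `k`-subalgebra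
generated by the ideal `I` (since `I` is an ideal, this is exactly `k + I`). -/
def Asub13 : Subalgebra k (MvPolynomial (Fin 2) k) :=
  Algebra.adjoin k (Istmt13 k : Set (MvPolynomial (Fin 2) k))

/-- The ring `A = k + I` as a type. -/
def Astmt13 : Type _ := ↥(Asub13 k)

instance : CommRing (Astmt13 k) := inferInstanceAs (CommRing ↥(Asub13 k))
instance : Algebra k (Astmt13 k) := inferInstanceAs (Algebra k ↥(Asub13 k))

/-- The inclusion `A ↪ B = k[X,Y]`. -/
def Aval13 : Astmt13 k →ₐ[k] MvPolynomial (Fin 2) k := (Asub13 k).val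

lemma X0sq_mem13 : (X 0 ^ 2 : MvPolynomial (Fin 2) k) ∈ Asub13 k :=
  Algebra.subset_adjoin (Ideal.subset_span (Set.mem_insert _ _))

lemma X1_mem13 : (X 1 : MvPolynomial (Fin 2) k) ∈ Asub13 k := by
  have h : (X 1 - 1 : MvPolynomial (Fin 2) k) ∈ Asub13 k :=
    Algebra.subset_adjoin (Ideal.subset_span (Set.mem_insert_of_mem _ rfl))
  simpa using add_mem h (one_mem (Asub13 k))

/-- `F = X²T² - Y ∈ A[T]`. -/
def Fstmt13 : Polynomial (Astmt13 k) :=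
  Polynomial.C (⟨X 0 ^ 2, X0sq_mem13 k⟩ : Asub13 k) * Polynomial.X ^ 2 -
    Polynomial.C (⟨X 1, X1_mem13 k⟩ : Asub13 k)

/-!
Only two facts matter: `F ≡ -1` modulo `I·B[T]`, and `I·B[T] ⊆ A[T]` because `I ⊆ A` is an ideal
of `B`. Writing `g = (F + 1)·g - F·g` for `g ∈ B[T]` shows `B[T] = A[T] + F·B[T]`; and if
`F·q ∈ A[T]`, the same identity for `q` gives `q ∈ A[T]`, whence `F·B[T] ∩ A[T] = F·A[T]`.
-/

namespace Polynomial

variable {A B : Type*} [CommRing A] [CommRing B] {ι : A →+* B} {I : Ideal B} {f : A[X]}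

theorem map_mem_map_C_of_mem_span_C (hf : f ∈ Ideal.span (C '' {x : A | ι x ∈ I})) : f.map ι ∈ I.map C := by
  have hle : Ideal.span (C '' {x : A | ι x ∈ I}) ≤ (I.map C).comap (mapRingHom ι) := by
    rw [Ideal.span_le]
    rintro _ ⟨x, hx, rfl⟩
    simpa using Ideal.mem_map_of_mem C hx
  exact hle hf

theorem lifts_of_mem_map_C (hI : (I : Set B) ⊆ Set.range ι) {g : B[X]} (hg : g ∈ I.map C) :
    g ∈ lifts ι :=
  (lifts_iff_coeff_lifts g).2 fun n => hI (Ideal.mem_map_C_iff.1 hg n)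

theorem C_mul_X_pow_sub_C_add_one_mem_span {a y : A} (ha : ι a ∈ I) (hy : ι y - 1 ∈ I) (n : ℕ) :
    C a * X ^ n - C y + 1 ∈ Ideal.span (C '' {x : A | ι x ∈ I}) := by
  have hy' : C (y - 1) ∈ Ideal.span (C '' {x : A | ι x ∈ I}) :=
    Ideal.subset_span ⟨y - 1, by simpa using hy, rfl⟩
  rw [sub_add, ← C_1, ← C_sub]
  exact Ideal.sub_mem _ (Ideal.mul_mem_right _ _ (Ideal.subset_span ⟨a, ha, rfl⟩)) hy'

theorem map_add_one_mul_mem_lifts (hI : (I : Set B) ⊆ Set.range ι)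
    (hf : f + 1 ∈ Ideal.span (C '' {x : A | ι x ∈ I})) (g : B[X]) : (f + 1).map ι * g ∈ lifts ι :=
  lifts_of_mem_map_C hI (Ideal.mul_mem_right _ _ (map_mem_map_C_of_mem_span_C hf))

theorem exists_eq_map_add_map_mul (hI : (I : Set B) ⊆ Set.range ι)
    (hf : f + 1 ∈ Ideal.span (C '' {x : A | ι x ∈ I})) (g : B[X]) :
    ∃ (h : A[X]) (q : B[X]), g = h.map ι + f.map ι * q := by
  obtain ⟨h, hh⟩ := (mem_lifts _).1 (map_add_one_mul_mem_lifts hI hf g)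
  refine ⟨h, -g, ?_⟩
  rw [hh, Polynomial.map_add, Polynomial.map_one]
  ring

theorem lifts_of_map_mul_mem_lifts (hI : (I : Set B) ⊆ Set.range ι)
    (hf : f + 1 ∈ Ideal.span (C '' {x : A | ι x ∈ I})) {q : B[X]} (hq : f.map ι * q ∈ lifts ι) :
    q ∈ lifts ι := by
  obtain ⟨a, ha⟩ := (mem_lifts _).1 (map_add_one_mul_mem_lifts hI hf q)
  obtain ⟨b, hb⟩ := (mem_lifts _).1 hq
  refine (mem_lifts _).2 ⟨a - b, ?_⟩
  rw [Polynomial.map_sub, ha, hb, Polynomial.map_add, Polynomial.map_one]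
  ring

theorem mem_span_singleton_iff_map_mem_span_singleton (hI : (I : Set B) ⊆ Set.range ι)
    (hf : f + 1 ∈ Ideal.span (C '' {x : A | ι x ∈ I})) (hι : Function.Injective ι) (h : A[X]) :
    h ∈ Ideal.span {f} ↔ h.map ι ∈ Ideal.span {f.map ι} := by
  simp only [Ideal.mem_span_singleton']
  constructor
  · rintro ⟨p, rfl⟩
    exact ⟨p.map ι, (Polynomial.map_mul ι).symm⟩
  · rintro ⟨q, hq⟩
    obtain ⟨a, rfl⟩ := (mem_lifts q).1 <|
      lifts_of_map_mul_mem_lifts hI hf ((mem_lifts _).2 ⟨h, by rw [← hq, mul_comm]⟩)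
    exact ⟨a, map_injective ι hι (by rw [Polynomial.map_mul, hq])⟩

end Polynomial

theorem Istmt13_subset_range_Aval13 :
    (Istmt13 k : Set (MvPolynomial (Fin 2) k)) ⊆ Set.range (Aval13 k).toRingHom :=
  fun x hx => ⟨⟨x, Algebra.subset_adjoin hx⟩, rfl⟩

theorem Fstmt13_add_one_mem :
    Fstmt13 k + 1 ∈
      Ideal.span (Polynomial.C '' {x : Astmt13 k | Aval13 k x ∈ Istmt13 k}) := by
  refine Polynomial.C_mul_X_pow_sub_C_add_one_mem_span ?_ ?_ 2
  · exact Ideal.subset_span (Set.mem_insert _ _)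
  · exact Ideal.subset_span (Set.mem_insert_of_mem _ rfl)

/-- Bhatwadekar's example, key identities: `F + 1 ∈ I·A[T]`,
`A[T] + F·B[T] = B[T]`, and `F·A[T] = F·B[T] ∩ A[T]`. -/
theorem stmt_13 :
    (Fstmt13 k + 1 ∈
      Ideal.span (Polynomial.C '' {x : Astmt13 k | Aval13 k x ∈ Istmt13 k})) ∧
    (∀ g : Polynomial (MvPolynomial (Fin 2) k),
      ∃ (h : Polynomial (Astmt13 k)) (q : Polynomial (MvPolynomial (Fin 2) k)),
        g = Polynomial.map (Aval13 k).toRingHom h +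
          Polynomial.map (Aval13 k).toRingHom (Fstmt13 k) * q) ∧
    (∀ h : Polynomial (Astmt13 k),
      h ∈ Ideal.span {Fstmt13 k} ↔
        Polynomial.map (Aval13 k).toRingHom h ∈
          Ideal.span {Polynomial.map (Aval13 k).toRingHom (Fstmt13 k)}) := by
  have hF := Fstmt13_add_one_mem k
  have hI := Istmt13_subset_range_Aval13 k
  exact ⟨hF, Polynomial.exists_eq_map_add_map_mul hI hF,
    Polynomial.mem_span_singleton_iff_map_mem_span_singleton hI hF Subtype.val_injective⟩

end StmtThirteen
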